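/- Let m, g > 0 with m g ≥ 32, σ ∈ {+1, −1}, e₃ = (0,0,1), a ≤ 0 ≤ b, and let X, V : [a,b] → ℝ³ be differentiable with X'(s) = V̂(s) := V(s)/√(m² + ‖V(s)‖²) and V'(s) = σ(E(s) + V̂(s) × B(s)) − m g e₃, where ‖E(s)‖ ≤ m g/8 and ‖B(s)‖ ≤ m g/8 for all s ∈ [a,b], and X₃(a) = X₃(b) = 0 with X₃ ≥ 0 on [a,b]. Then for every β > 0 and every s ∈ [a,b], the Jüttner weight w_β(x,u) = exp(β(√(m² + ‖u‖²) + m g x₃) + (β/2)‖(x₁,x₂)‖) satisfies 1/w_β(X(s),V(s)) ≤ exp(−(β/2)√(m² + ‖V(0)‖²) − (β/2) m g·X₃(0) − (β/2)‖(X₁(0),X₂(0))‖). -/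

import Mathlib

/-
Along a characteristic the total energy `H = √(m² + ‖V‖²) + m g X₃` has derivative `σ V̂ ⬝ E`,
so it varies at rate at most `‖E‖`, and `X` moves at speed `‖V̂‖ ≤ 1`. The functionals
`H ± (m g t + V₃)` vary at rate at most `3 sup (‖E‖, ‖B‖)`; since `√(m² + ‖V‖²) ≥ |V₃|` they
dominate `± m g t` where `X₃` vanishes, which bounds the travel time: `m g |s| ≤ (16/5) H(0)`.
Hence `H(s) ≥ (3/5) H(0)`, and for `m g ≥ 32` the horizontal distance covered is at most
`H(0)/10`, which gives `H(0) + ‖X_∥(0)‖ ≤ 2 H(s) + ‖X_∥(s)‖`.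
-/

noncomputable section

local notation "⟪" x ", " y "⟫" => @inner ℝ _ _ x y

/-- The cross product on `ℝ³` (Euclidean). -/
noncomputable def cross3 (a b : EuclideanSpace ℝ (Fin 3)) : EuclideanSpace ℝ (Fin 3) :=
  (WithLp.equiv 2 (Fin 3 → ℝ)).symm
    ![a 1 * b 2 - a 2 * b 1, a 2 * b 0 - a 0 * b 2, a 0 * b 1 - a 1 * b 0]

/-- The Jüttner-type weight
`w_β(x, u) = exp(β(√(m² + ‖u‖²) + m g x₃) + (β/2)‖(x₁,x₂)‖)`. -/
noncomputable def juttnerWeight (m g β : ℝ) (x u : EuclideanSpace ℝ (Fin 3)) : ℝ :=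
  Real.exp (β * (Real.sqrt (m ^ 2 + ‖u‖ ^ 2) + m * g * x 2) +
    β / 2 * Real.sqrt (x 0 ^ 2 + x 1 ^ 2))

lemma cross3_eq_crossProduct (u w : EuclideanSpace ℝ (Fin 3)) :
    cross3 u w = WithLp.toLp 2 (crossProduct (WithLp.ofLp u) (WithLp.ofLp w)) := by
  rw [cross_apply]; rfl

lemma inner_cross3_self (u w : EuclideanSpace ℝ (Fin 3)) : ⟪u, cross3 u w⟫ = 0 := by
  simp [cross3_eq_crossProduct, EuclideanSpace.inner_eq_star_dotProduct,
    dotProduct_comm _ (WithLp.ofLp u)]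

lemma norm_cross3_le (u w : EuclideanSpace ℝ (Fin 3)) : ‖cross3 u w‖ ≤ ‖u‖ * ‖w‖ := by
  have lagrange := cross_dot_cross (WithLp.ofLp u) (WithLp.ofLp w) (WithLp.ofLp u) (WithLp.ofLp w)
  rw [dotProduct_comm (WithLp.ofLp w) (WithLp.ofLp u)] at lagrange
  rw [← sq_le_sq₀ (norm_nonneg _) (by positivity), mul_pow, ← real_inner_self_eq_norm_sq,
    ← real_inner_self_eq_norm_sq, ← real_inner_self_eq_norm_sq]
  simp only [cross3_eq_crossProduct, EuclideanSpace.inner_eq_star_dotProduct, star_trivial,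
    lagrange]
  nlinarith [mul_self_nonneg (WithLp.ofLp u ⬝ᵥ WithLp.ofLp w)]

section Energy

variable {F : Type*} [NormedAddCommGroup F] {m : ℝ}

def relativisticEnergy (m : ℝ) (v : F) : ℝ := √(m ^ 2 + ‖v‖ ^ 2)

lemma norm_le_relativisticEnergy (v : F) : ‖v‖ ≤ relativisticEnergy m v :=
  Real.le_sqrt_of_sq_le (by nlinarith [sq_nonneg m])

lemma relativisticEnergy_nonneg (m : ℝ) (v : F) : 0 ≤ relativisticEnergy m v :=
  Real.sqrt_nonneg _

variable [InnerProductSpace ℝ F]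

def relVelocity (m : ℝ) (v : F) : F := (relativisticEnergy m v)⁻¹ • v

lemma norm_relVelocity_le_one (m : ℝ) (v : F) : ‖relVelocity m v‖ ≤ 1 := by
  rw [relVelocity, norm_smul, norm_inv, Real.norm_of_nonneg (relativisticEnergy_nonneg m v)]
  exact inv_mul_le_one_of_le₀ (norm_le_relativisticEnergy v) (relativisticEnergy_nonneg m v)

lemma HasDerivWithinAt.relativisticEnergy {V : ℝ → F} {w : F} {s : Set ℝ} {t : ℝ}
    (hm : m ≠ 0) (hV : HasDerivWithinAt V w s t) :
    HasDerivWithinAt (fun u ↦ relativisticEnergy m (V u)) ⟪relVelocity m (V t), w⟫ s t := by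
  have h := ((hasDerivWithinAt_const t s (m ^ 2)).add hV.norm_sq).sqrt
    (by simp only [Pi.add_apply]; positivity)
  refine h.congr_deriv ?_
  simp only [Pi.add_apply, zero_add, relVelocity, real_inner_smul_left, _root_.relativisticEnergy]
  field_simp

lemma abs_inner_relVelocity_le (m : ℝ) (v e : F) : |⟪relVelocity m v, e⟫| ≤ ‖e‖ :=
  (abs_real_inner_le_norm _ _).trans <|
    mul_le_of_le_one_left (norm_nonneg _) (norm_relVelocity_le_one m v)

end Energy

def horizontal (x : EuclideanSpace ℝ (Fin 3)) : EuclideanSpace ℝ (Fin 2) := !₂[x 0, x 1]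

lemma norm_horizontal (x : EuclideanSpace ℝ (Fin 3)) :
    ‖horizontal x‖ = √(x 0 ^ 2 + x 1 ^ 2) := by
  simp [horizontal, EuclideanSpace.norm_eq, Fin.sum_univ_two]

lemma norm_horizontal_le (x : EuclideanSpace ℝ (Fin 3)) : ‖horizontal x‖ ≤ ‖x‖ := by
  rw [norm_horizontal, EuclideanSpace.norm_eq, Fin.sum_univ_three]
  simp only [Real.norm_eq_abs, sq_abs]
  exact Real.sqrt_le_sqrt (by nlinarith [sq_nonneg (x 2)])

lemma horizontal_sub (x y : EuclideanSpace ℝ (Fin 3)) :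
    horizontal (x - y) = horizontal x - horizontal y := by
  ext i; fin_cases i <;> simp [horizontal]

lemma sqrt_horizontal_le_add_norm_sub (x y : EuclideanSpace ℝ (Fin 3)) :
    √(x 0 ^ 2 + x 1 ^ 2) ≤ √(y 0 ^ 2 + y 1 ^ 2) + ‖x - y‖ := by
  rw [← norm_horizontal, ← norm_horizontal]
  calc ‖horizontal x‖ ≤ ‖horizontal y‖ + ‖horizontal x - horizontal y‖ := norm_le_insert' _ _
    _ ≤ ‖horizontal y‖ + ‖x - y‖ := by
      grw [← horizontal_sub, norm_horizontal_le (x - y)]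

lemma HasDerivWithinAt.euclideanSpace_apply {ι : Type*} [Fintype ι]
    {Y : ℝ → EuclideanSpace ℝ ι} {y : EuclideanSpace ℝ ι} {I : Set ℝ} {t : ℝ}
    (hY : HasDerivWithinAt Y y I t) (i : ι) :
    HasDerivWithinAt (fun u ↦ Y u i) (y i) I t :=
  (EuclideanSpace.proj i : EuclideanSpace ℝ ι →L[ℝ] ℝ).hasFDerivAt.comp_hasDerivWithinAt t hY

def totalEnergy (m g : ℝ) (x v : EuclideanSpace ℝ (Fin 3)) : ℝ :=
  relativisticEnergy m v + m * g * x 2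

def IsCharacteristicOn (m g σ : ℝ) (E B X V : ℝ → EuclideanSpace ℝ (Fin 3)) (I : Set ℝ) :
    Prop :=
  ∀ t ∈ I, HasDerivWithinAt X (relVelocity m (V t)) I t ∧
    HasDerivWithinAt V (σ • (E t + cross3 (relVelocity m (V t)) (B t)) -
      (m * g) • EuclideanSpace.single 2 1) I t

namespace IsCharacteristicOn

variable {m g σ C : ℝ} {E B X V : ℝ → EuclideanSpace ℝ (Fin 3)} {I : Set ℝ} {s t : ℝ}

lemma hasDerivWithinAt_totalEnergy (h : IsCharacteristicOn m g σ E B X V I) (hm : m ≠ 0)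
    (ht : t ∈ I) :
    HasDerivWithinAt (fun u ↦ totalEnergy m g (X u) (V u))
      (σ * ⟪relVelocity m (V t), E t⟫) I t := by
  obtain ⟨hX, hV⟩ := h t ht
  refine ((hV.relativisticEnergy hm).add
    ((hX.euclideanSpace_apply 2).const_mul (m * g))).congr_deriv ?_
  rw [inner_sub_right, real_inner_smul_right, inner_add_right, inner_cross3_self,
    real_inner_smul_right, EuclideanSpace.inner_single_right]
  simp

lemma hasDerivWithinAt_vertical (h : IsCharacteristicOn m g σ E B X V I) (ht : t ∈ I) :
    HasDerivWithinAt (fun u ↦ m * g * u + V u 2)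
      (σ * (E t 2 + cross3 (relVelocity m (V t)) (B t) 2)) I t := by
  refine (((hasDerivWithinAt_id t I).const_mul (m * g)).add
    ((h t ht).2.euclideanSpace_apply 2)).congr_deriv ?_
  simp only [smul_add, PiLp.sub_apply, PiLp.add_apply, PiLp.smul_apply, smul_eq_mul,
    PiLp.single_eq_same, mul_one, add_sub_cancel]
  ring

lemma norm_sub_le (h : IsCharacteristicOn m g σ E B X V I) (hI : Convex ℝ I) (hs : s ∈ I)
    (ht : t ∈ I) : ‖X t - X s‖ ≤ |t - s| := by
  simpa using hI.norm_image_sub_le_of_norm_hasDerivWithin_le (fun u hu ↦ (h u hu).1)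
    (fun u _ ↦ norm_relVelocity_le_one m (V u)) hs ht

lemma abs_totalEnergy_sub_le (h : IsCharacteristicOn m g σ E B X V I) (hm : m ≠ 0)
    (hσ : |σ| ≤ 1) (hI : Convex ℝ I) (hE : ∀ u ∈ I, ‖E u‖ ≤ C) (hs : s ∈ I) (ht : t ∈ I) :
    |totalEnergy m g (X t) (V t) - totalEnergy m g (X s) (V s)| ≤ C * |t - s| := by
  refine hI.norm_image_sub_le_of_norm_hasDerivWithin_le
    (fun u hu ↦ h.hasDerivWithinAt_totalEnergy hm hu) (fun u hu ↦ ?_) hs ht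
  have hinner : ‖⟪relVelocity m (V u), E u⟫‖ ≤ C :=
    (abs_inner_relVelocity_le m _ _).trans (hE u hu)
  exact (norm_mul_le_of_le hσ hinner).trans_eq (one_mul C)

lemma abs_totalEnergy_add_vertical_sub_le (h : IsCharacteristicOn m g σ E B X V I)
    (hm : m ≠ 0) (hσ : |σ| ≤ 1) {ε : ℝ} (hε : |ε| ≤ 1) (hI : Convex ℝ I)
    (hE : ∀ u ∈ I, ‖E u‖ ≤ C) (hB : ∀ u ∈ I, ‖B u‖ ≤ C) (hs : s ∈ I) (ht : t ∈ I) :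
    |totalEnergy m g (X t) (V t) + ε * (m * g * t + V t 2) -
      (totalEnergy m g (X s) (V s) + ε * (m * g * s + V s 2))| ≤ 3 * C * |t - s| := by
  refine hI.norm_image_sub_le_of_norm_hasDerivWithin_le
    (fun u hu ↦ (h.hasDerivWithinAt_totalEnergy hm hu).add
      ((h.hasDerivWithinAt_vertical hu).const_mul ε)) (fun u hu ↦ ?_) hs ht
  have hinner : ‖⟪relVelocity m (V u), E u⟫‖ ≤ C :=
    (abs_inner_relVelocity_le m _ _).trans (hE u hu)
  have hE₂ : ‖E u 2‖ ≤ C := (PiLp.norm_apply_le _ 2).trans (hE u hu)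
  have hcross : ‖cross3 (relVelocity m (V u)) (B u) 2‖ ≤ C :=
    calc _ ≤ ‖relVelocity m (V u)‖ * ‖B u‖ :=
          (PiLp.norm_apply_le _ 2).trans (norm_cross3_le _ _)
      _ ≤ 1 * C := mul_le_mul (norm_relVelocity_le_one m _) (hB u hu) (norm_nonneg _) zero_le_one
      _ = C := one_mul C
  have hforce : ‖E u 2 + cross3 (relVelocity m (V u)) (B u) 2‖ ≤ C + C :=
    (norm_add_le _ _).trans (add_le_add hE₂ hcross)
  calc _ ≤ 1 * C + 1 * (1 * (C + C)) := (norm_add_le _ _).trans <| add_le_add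
        (norm_mul_le_of_le hσ hinner) (norm_mul_le_of_le hε (norm_mul_le_of_le hσ hforce))
    _ = 3 * C := by ring

lemma travel_time_le (h : IsCharacteristicOn m g σ E B X V I) (hm : m ≠ 0) (hσ : |σ| ≤ 1)
    (hI : Convex ℝ I) (hE : ∀ u ∈ I, ‖E u‖ ≤ C) (hB : ∀ u ∈ I, ‖B u‖ ≤ C) (hmg : 0 ≤ m * g)
    (hs : s ∈ I) (hXs : 0 ≤ X s 2) (ht : t ∈ I) (hXt : X t 2 = 0) :
    (m * g - 3 * C) * |t - s| ≤ 2 * totalEnergy m g (X s) (V s) := by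
  suffices hsigned : ∀ ε : ℝ, |ε| ≤ 1 → ε * (t - s) = |t - s| →
      (m * g - 3 * C) * |t - s| ≤ 2 * totalEnergy m g (X s) (V s) by
    rcases le_total s t with hst | hts
    · exact hsigned 1 (by simp) (by rw [abs_of_nonneg (sub_nonneg.2 hst), one_mul])
    · exact hsigned (-1) (by simp) (by rw [abs_of_nonpos (sub_nonpos.2 hts), neg_one_mul])
  intro ε hε hεts
  have hvert (u : ℝ) : |ε * V u 2| ≤ relativisticEnergy m (V u) :=
    (norm_mul_le_of_le hε (PiLp.norm_apply_le (V u) 2)).trans <|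
      (one_mul _).trans_le (norm_le_relativisticEnergy _)
  have hΦ := (abs_le.1 (h.abs_totalEnergy_add_vertical_sub_le hm hσ hε hI hE hB hs ht)).2
  have hεt := (abs_le.1 (hvert t)).1
  have hεs := (abs_le.1 (hvert s)).2
  have hXs' : 0 ≤ m * g * X s 2 := mul_nonneg hmg hXs
  have hlin : ε * (m * g * t + V t 2) - ε * (m * g * s + V s 2) =
      m * g * |t - s| + ε * V t 2 - ε * V s 2 := by
    rw [← hεts]; ring
  simp only [totalEnergy, hXt, mul_zero, add_zero] at hΦ ⊢
  linarith

lemma travel_time_le_of_mem_Icc {a b u : ℝ}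
    (h : IsCharacteristicOn m g σ E B X V (Set.Icc a b)) (hm : m ≠ 0) (hσ : |σ| ≤ 1)
    (hE : ∀ u ∈ Set.Icc a b, ‖E u‖ ≤ C)
    (hB : ∀ u ∈ Set.Icc a b, ‖B u‖ ≤ C) (hmg : 0 ≤ m * g) (hC : 3 * C ≤ m * g)
    (hs : s ∈ Set.Icc a b) (hXs : 0 ≤ X s 2) (hu : u ∈ Set.Icc a b) (hXa : X a 2 = 0)
    (hXb : X b 2 = 0) :
    (m * g - 3 * C) * |u - s| ≤ 2 * totalEnergy m g (X s) (V s) := by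
  have hab : a ≤ b := hs.1.trans hs.2
  rcases le_total u s with hus | hsu
  · calc (m * g - 3 * C) * |u - s| ≤ (m * g - 3 * C) * |a - s| := by
          refine mul_le_mul_of_nonneg_left ?_ (by linarith)
          rw [abs_of_nonpos (by linarith), abs_of_nonpos (by linarith [hs.1])]
          linarith [hu.1]
      _ ≤ _ := h.travel_time_le hm hσ (convex_Icc a b) hE hB hmg hs hXs
          (Set.left_mem_Icc.2 hab) hXa
  · calc (m * g - 3 * C) * |u - s| ≤ (m * g - 3 * C) * |b - s| := by
          refine mul_le_mul_of_nonneg_left ?_ (by linarith)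
          rw [abs_of_nonneg (by linarith), abs_of_nonneg (by linarith [hs.2])]
          linarith [hu.2]
      _ ≤ _ := h.travel_time_le hm hσ (convex_Icc a b) hE hB hmg hs hXs
          (Set.right_mem_Icc.2 hab) hXb

end IsCharacteristicOn

theorem juttner_weight_comparison_general
    (m g σ : ℝ) (hm : 0 < m) (hmg : 32 ≤ m * g) (hσ : σ = 1 ∨ σ = -1)
    (a b : ℝ) (ha : a ≤ 0) (hb : 0 ≤ b)
    (X V E B : ℝ → EuclideanSpace ℝ (Fin 3))
    (hX : ∀ s ∈ Set.Icc a b,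
      HasDerivWithinAt X ((Real.sqrt (m ^ 2 + ‖V s‖ ^ 2))⁻¹ • V s) (Set.Icc a b) s)
    (hV : ∀ s ∈ Set.Icc a b,
      HasDerivWithinAt V
        (σ • (E s + cross3 ((Real.sqrt (m ^ 2 + ‖V s‖ ^ 2))⁻¹ • V s) (B s)) -
          (m * g) • EuclideanSpace.single (2 : Fin 3) (1 : ℝ))
        (Set.Icc a b) s)
    (hE : ∀ s ∈ Set.Icc a b, ‖E s‖ ≤ m * g / 8)
    (hB : ∀ s ∈ Set.Icc a b, ‖B s‖ ≤ m * g / 8)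
    (hXa : X a 2 = 0) (hXb : X b 2 = 0)
    (hX3 : ∀ s ∈ Set.Icc a b, 0 ≤ X s 2)
    (β : ℝ) (hβ : 0 < β) (s : ℝ) (hs : s ∈ Set.Icc a b) :
    1 / juttnerWeight m g β (X s) (V s) ≤
      Real.exp (-(β / 2) * Real.sqrt (m ^ 2 + ‖V 0‖ ^ 2) - β / 2 * (m * g * X 0 2) -
        β / 2 * Real.sqrt (X 0 0 ^ 2 + X 0 1 ^ 2)) := by
  have hσ' : |σ| ≤ 1 := by rcases hσ with rfl | rfl <;> simp
  have hchar : IsCharacteristicOn m g σ E B X V (Set.Icc a b) := fun t ht ↦ ⟨hX t ht, hV t ht⟩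
  have h0 : (0 : ℝ) ∈ Set.Icc a b := ⟨ha, hb⟩
  have htravel := hchar.travel_time_le_of_mem_Icc hm.ne' hσ' hE hB (by linarith) (by linarith)
    h0 (hX3 0 h0) hs hXa hXb
  have henergy := abs_le.1 (hchar.abs_totalEnergy_sub_le hm.ne' hσ' (convex_Icc a b) hE h0 hs)
  have hhorizontal := (sqrt_horizontal_le_add_norm_sub (X 0) (X s)).trans
    (add_le_add le_rfl (hchar.norm_sub_le (convex_Icc a b) hs h0))
  have h32 : 32 * |s| ≤ m * g * |s| := mul_le_mul_of_nonneg_right hmg (abs_nonneg s)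
  rw [sub_zero] at htravel henergy
  rw [zero_sub, abs_neg] at hhorizontal
  have hexponent : totalEnergy m g (X 0) (V 0) + √(X 0 0 ^ 2 + X 0 1 ^ 2) ≤
      2 * totalEnergy m g (X s) (V s) + √(X s 0 ^ 2 + X s 1 ^ 2) := by
    linarith
  rw [juttnerWeight, one_div, ← Real.exp_neg, Real.exp_le_exp]
  simp only [totalEnergy, relativisticEnergy] at hexponent
  linarith [mul_le_mul_of_nonneg_left hexponent (half_pos hβ).le]

/-- Weight comparison along characteristics.  Under the travel-time setting
(`m g ≥ 32`, `X' = V̂`, `V' = σ(E + V̂ × B) − m g e₃` on `[a,b]` with `a ≤ 0 ≤ b`,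
`‖E‖, ‖B‖ ≤ m g/8`, `X₃(a) = X₃(b) = 0`, `X₃ ≥ 0` on `[a,b]`), for every `β > 0` and every
`s ∈ [a,b]`, the Jüttner weight satisfies
`1/w_β(X(s),V(s)) ≤ exp(−(β/2)√(m²+‖V(0)‖²) − (β/2) m g X₃(0) − (β/2)‖(X₁(0),X₂(0))‖)`. -/
theorem juttner_weight_comparison
    (m g σ : ℝ) (hm : 0 < m) (hg : 0 < g) (hmg : 32 ≤ m * g) (hσ : σ = 1 ∨ σ = -1)
    (a b : ℝ) (ha : a ≤ 0) (hb : 0 ≤ b)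
    (X V E B : ℝ → EuclideanSpace ℝ (Fin 3))
    (hX : ∀ s ∈ Set.Icc a b,
      HasDerivWithinAt X ((Real.sqrt (m ^ 2 + ‖V s‖ ^ 2))⁻¹ • V s) (Set.Icc a b) s)
    (hV : ∀ s ∈ Set.Icc a b,
      HasDerivWithinAt V
        (σ • (E s + cross3 ((Real.sqrt (m ^ 2 + ‖V s‖ ^ 2))⁻¹ • V s) (B s)) -
          (m * g) • EuclideanSpace.single (2 : Fin 3) (1 : ℝ))
        (Set.Icc a b) s)
    (hE : ∀ s ∈ Set.Icc a b, ‖E s‖ ≤ m * g / 8)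
    (hB : ∀ s ∈ Set.Icc a b, ‖B s‖ ≤ m * g / 8)
    (hXa : X a 2 = 0) (hXb : X b 2 = 0)
    (hX3 : ∀ s ∈ Set.Icc a b, 0 ≤ X s 2)
    (β : ℝ) (hβ : 0 < β) (s : ℝ) (hs : s ∈ Set.Icc a b) :
    1 / juttnerWeight m g β (X s) (V s) ≤
      Real.exp (-(β / 2) * Real.sqrt (m ^ 2 + ‖V 0‖ ^ 2) - β / 2 * (m * g * X 0 2) -
        β / 2 * Real.sqrt (X 0 0 ^ 2 + X 0 1 ^ 2)) :=
  juttner_weight_comparison_general m g σ hm hmg hσ a b ha hb X V E B hX hV hE hB hXa hXb hX3 β hβ s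
    hs
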